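/- arXiv:1907.03361 — 2 statements merged into one kernel-verified Lean document; each statement's English description precedes it below -/
import Mathlib

section
/- Let Z be a standard Gaussian random variable in ℝ^{d_0} (i.i.d. N(0,1) coordinates) and let X be a real-valued random variable with a Pareto tail: P(X > x) = x^{−α} for x ≥ 1 with α > 0. Then there is no Lipschitz function g : ℝ^{d_0} → ℝ such that g(Z) has the same distribution as X. -/
open MeasureTheory ProbabilityTheory
open scoped ENNReal NNReal

namespace Stmt4Aux

open Real

noncomputable def K : ℝ≥0∞ := ∫⁻ y, ENNReal.ofReal (Real.exp y) ∂(gaussianReal 0 1)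

lemma K_lt_top : K < ⊤ := by
  rw [K, gaussianReal_of_var_ne_zero 0 one_ne_zero,
    lintegral_withDensity_eq_lintegral_mul _ (measurable_gaussianPDF 0 1)
      measurable_exp.ennreal_ofReal]
  have hint : Integrable (fun y : ℝ => gaussianPDFReal 0 1 y * Real.exp y) := by
    have h1 : Integrable (fun y : ℝ => Real.exp (-(1/2 : ℝ) * y ^ 2)) :=
      integrable_exp_neg_mul_sq (by norm_num)
    have h2 : Integrable (fun y : ℝ => Real.exp (-(1/2 : ℝ) * (y - 1) ^ 2)) :=
      h1.comp_sub_right 1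
    have h3 := h2.const_mul ((Real.sqrt (2 * π * ((1:ℝ≥0):ℝ)))⁻¹ * Real.exp (1/2))
    refine h3.congr (Filter.Eventually.of_forall fun y => ?_)
    simp only [gaussianPDFReal]
    have h12 : (1:ℝ)/2 + -(1/2 : ℝ) * (y-1)^2 = -(y-0)^2/(2*((1:ℝ≥0):ℝ)) + y := by
      push_cast; ring
    calc (Real.sqrt (2 * π * ((1:ℝ≥0):ℝ)))⁻¹ * Real.exp (1/2)
          * Real.exp (-(1/2:ℝ) * (y-1)^2)
        = (Real.sqrt (2 * π * ((1:ℝ≥0):ℝ)))⁻¹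
            * Real.exp ((1:ℝ)/2 + -(1/2 : ℝ) * (y-1)^2) := by
          rw [Real.exp_add]; ring
      _ = (Real.sqrt (2 * π * ((1:ℝ≥0):ℝ)))⁻¹
            * Real.exp (-(y-0)^2/(2*((1:ℝ≥0):ℝ)) + y) := by rw [h12]
      _ = (Real.sqrt (2 * π * ((1:ℝ≥0):ℝ)))⁻¹
            * Real.exp (-(y-0)^2/(2*((1:ℝ≥0):ℝ))) * Real.exp y := by
          rw [Real.exp_add]; ring
  calc ∫⁻ y, (gaussianPDF 0 1 * fun y => ENNReal.ofReal (Real.exp y)) y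
      = ∫⁻ y, ENNReal.ofReal (gaussianPDFReal 0 1 y * Real.exp y) := by
        refine lintegral_congr fun y => ?_
        simp only [Pi.mul_apply, gaussianPDF]
        rw [← ENNReal.ofReal_mul (gaussianPDFReal_nonneg 0 1 y)]
    _ < ⊤ := hint.lintegral_lt_top

lemma gauss_tail (t : ℝ) :
    (gaussianReal 0 1) {y | t ≤ y} ≤ K * ENNReal.ofReal (Real.exp (-t)) := by
  have h := mul_meas_ge_le_lintegral (μ := gaussianReal 0 1)
    (f := fun y => ENNReal.ofReal (Real.exp y)) measurable_exp.ennreal_ofReal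
    (ENNReal.ofReal (Real.exp t))
  have hset : {x : ℝ | ENNReal.ofReal (Real.exp t) ≤ ENNReal.ofReal (Real.exp x)}
      = {y : ℝ | t ≤ y} := by
    ext x
    simp [ENNReal.ofReal_le_ofReal_iff (Real.exp_nonneg _), Real.exp_le_exp]
  rw [hset] at h
  calc (gaussianReal 0 1) {y | t ≤ y}
      = (gaussianReal 0 1) {y | t ≤ y} *
        (ENNReal.ofReal (Real.exp t) * ENNReal.ofReal (Real.exp (-t))) := by
        rw [← ENNReal.ofReal_mul (Real.exp_nonneg _), ← Real.exp_add, add_neg_cancel,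
          Real.exp_zero, ENNReal.ofReal_one, mul_one]
    _ = (ENNReal.ofReal (Real.exp t) * (gaussianReal 0 1) {y | t ≤ y}) *
        ENNReal.ofReal (Real.exp (-t)) := by ring
    _ ≤ K * ENNReal.ofReal (Real.exp (-t)) := mul_le_mul_left h _

lemma gauss_map_neg :
    (gaussianReal 0 1).map (fun y : ℝ => -y) = gaussianReal 0 1 := by
  have h := gaussianReal_map_const_mul (μ := 0) (v := 1) (-1)
  have h1 : (fun y : ℝ => (-1 : ℝ) * y) = fun y : ℝ => -y := by
    funext y; ring
  have h2 : (⟨(-1 : ℝ) ^ 2, sq_nonneg ((-1 : ℝ))⟩ : ℝ≥0) * 1 = 1 := by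
    refine Subtype.ext ?_
    norm_num
  rw [h1] at h
  rw [h]
  congr 1
  ring

lemma gauss_abs_tail (t : ℝ) :
    (gaussianReal 0 1) {y | t ≤ |y|} ≤ 2 * K * ENNReal.ofReal (Real.exp (-t)) := by
  have hsub : {y : ℝ | t ≤ |y|} ⊆ {y : ℝ | t ≤ y} ∪ {y : ℝ | t ≤ -y} := by
    intro y hy
    rcases abs_choice y with h | h
    · left; rwa [Set.mem_setOf_eq, ← h]
    · right; rwa [Set.mem_setOf_eq, ← h]
  have hneg : (gaussianReal 0 1) {y | t ≤ -y} = (gaussianReal 0 1) {y | t ≤ y} := by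
    have hpre : {y : ℝ | t ≤ -y} = (fun y : ℝ => -y) ⁻¹' {y : ℝ | t ≤ y} := rfl
    have hms : MeasurableSet {y : ℝ | t ≤ y} :=
      measurableSet_le measurable_const measurable_id
    have hmn : Measurable (fun y : ℝ => -y) := measurable_neg
    rw [hpre, ← Measure.map_apply hmn hms, gauss_map_neg]
  calc (gaussianReal 0 1) {y | t ≤ |y|}
      ≤ (gaussianReal 0 1) {y | t ≤ y} + (gaussianReal 0 1) {y | t ≤ -y} :=
        (measure_mono hsub).trans (measure_union_le _ _)
    _ ≤ K * ENNReal.ofReal (Real.exp (-t)) + K * ENNReal.ofReal (Real.exp (-t)) := by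
        rw [hneg]; exact add_le_add (gauss_tail t) (gauss_tail t)
    _ = 2 * K * ENNReal.ofReal (Real.exp (-t)) := by ring

end Stmt4Aux

/-- no Lipschitz (w.r.t. ℓ¹-norm) function maps standard Gaussian noise
to a random variable with an exact Pareto tail P(X > x) = x^(-α), x ≥ 1. -/
theorem stmt4 {Ω : Type*} [MeasurableSpace Ω] (μ : Measure Ω) [IsProbabilityMeasure μ]
    (d₀ : ℕ) (hd₀ : 0 < d₀) (Z : Fin d₀ → Ω → ℝ)
    (hmeas : ∀ j, Measurable (Z j))
    (hindep : iIndepFun Z μ)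
    (hgauss : ∀ j, Measure.map (Z j) μ = gaussianReal 0 1)
    (X : Ω → ℝ) (hX : Measurable X) (α : ℝ) (hα : 0 < α)
    (hpareto : ∀ x : ℝ, 1 ≤ x → μ {ω | X ω > x} = ENNReal.ofReal (x ^ (-α))) :
    ¬ ∃ (g : (Fin d₀ → ℝ) → ℝ) (L : ℝ),
      (∀ z z' : Fin d₀ → ℝ, |g z - g z'| ≤ L * ∑ i, |z i - z' i|) ∧
      Measure.map (fun ω => g (fun i => Z i ω)) μ = Measure.map X μ := by
  rintro ⟨g, L, hLip, hmap⟩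
  set c : ℝ := max L 1 with hcdef
  have hc1 : (1 : ℝ) ≤ c := le_max_right _ _
  have hc0 : (0 : ℝ) < c := lt_of_lt_of_le one_pos hc1
  have hLip' : ∀ z z' : Fin d₀ → ℝ, |g z - g z'| ≤ c * ∑ i, |z i - z' i| := fun z z' =>
    (hLip z z').trans (mul_le_mul_of_nonneg_right (le_max_left _ _)
      (Finset.sum_nonneg fun i _ => abs_nonneg _))
  -- g is continuous, hence measurable
  have hgcont : Continuous g := by
    have : LipschitzWith (c * (d₀:ℝ)).toNNReal g := by
      apply LipschitzWith.of_dist_le_mul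
      intro z z'
      have hco : (((c * (d₀:ℝ)).toNNReal : ℝ≥0) : ℝ) = c * d₀ :=
        Real.coe_toNNReal _ (by positivity)
      rw [Real.dist_eq, hco]
      refine (hLip' z z').trans ?_
      have hsum : ∑ i, |z i - z' i| ≤ d₀ * dist z z' := by
        have h1 : ∀ i ∈ Finset.univ, |z i - z' i| ≤ dist z z' := fun i _ => by
          rw [← Real.dist_eq]; exact dist_le_pi_dist z z' i
        calc ∑ i, |z i - z' i| ≤ Finset.univ.card • dist z z' :=
              Finset.sum_le_card_nsmul _ _ _ h1
          _ = d₀ * dist z z' := by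
              rw [Finset.card_univ, Fintype.card_fin, nsmul_eq_mul]
      calc c * ∑ i, |z i - z' i| ≤ c * (d₀ * dist z z') := by
            exact mul_le_mul_of_nonneg_left hsum hc0.le
        _ = c * d₀ * dist z z' := by ring
    exact this.continuous
  have hgZmeas : Measurable fun ω => g (fun i => Z i ω) :=
    hgcont.measurable.comp (measurable_pi_lambda _ fun i => hmeas i)
  -- translate the Pareto tail into a tail for g ∘ Z
  have key : ∀ x : ℝ, μ {ω | X ω > x} = μ {ω | g (fun i => Z i ω) > x} := by
    intro x
    have h1 : {ω | X ω > x} = X ⁻¹' Set.Ioi x := rfl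
    have h2 : {ω | g (fun i => Z i ω) > x}
        = (fun ω => g (fun i => Z i ω)) ⁻¹' Set.Ioi x := rfl
    rw [h1, h2, ← Measure.map_apply hX measurableSet_Ioi, ← hmap,
      Measure.map_apply hgZmeas measurableSet_Ioi]
  -- per-coordinate Gaussian tail bound
  have hcoord : ∀ (j : Fin d₀) (t : ℝ),
      μ {ω | t ≤ |Z j ω|} ≤ 2 * Stmt4Aux.K * ENNReal.ofReal (Real.exp (-t)) := by
    intro j t
    have hset : MeasurableSet {y : ℝ | t ≤ |y|} :=
      measurableSet_le measurable_const measurable_abs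
    have h1 : {ω | t ≤ |Z j ω|} = Z j ⁻¹' {y : ℝ | t ≤ |y|} := rfl
    rw [h1, ← Measure.map_apply (hmeas j) hset, hgauss j]
    exact Stmt4Aux.gauss_abs_tail t
  -- union bound
  have hsub : ∀ x : ℝ, g 0 < x → {ω | g (fun i => Z i ω) > x} ⊆
      ⋃ j, {ω | (x - g 0) / (c * d₀) ≤ |Z j ω|} := by
    intro x hgx ω hω
    by_contra hcon
    simp only [Set.mem_iUnion, Set.mem_setOf_eq, not_exists, not_le] at hcon
    have hb : g (fun i => Z i ω) ≤ g 0 + c * ∑ i, |Z i ω| := by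
      have h := hLip' (fun i => Z i ω) 0
      simp only [Pi.zero_apply, sub_zero] at h
      have h2 := (abs_le.mp h).2
      linarith
    have hsum : ∑ i, |Z i ω| ≤ d₀ * ((x - g 0) / (c * d₀)) := by
      calc ∑ i, |Z i ω| ≤ Finset.univ.card • ((x - g 0) / (c * d₀)) :=
            Finset.sum_le_card_nsmul _ _ _ (fun i _ => (hcon i).le)
        _ = d₀ * ((x - g 0) / (c * d₀)) := by
            rw [Finset.card_univ, Fintype.card_fin, nsmul_eq_mul]
    have hcd : (0 : ℝ) < c * d₀ := by positivity
    have : c * ∑ i, |Z i ω| ≤ x - g 0 := by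
      calc c * ∑ i, |Z i ω| ≤ c * (d₀ * ((x - g 0) / (c * d₀))) :=
            mul_le_mul_of_nonneg_left hsum hc0.le
        _ = x - g 0 := by field_simp
    have hω' : x < g (fun i => Z i ω) := hω
    linarith
  -- the quantitative tail bound
  set Kr : ℝ := Stmt4Aux.K.toReal with hKr
  have hKr0 : 0 ≤ Kr := ENNReal.toReal_nonneg
  have hKeq : Stmt4Aux.K = ENNReal.ofReal Kr := (ENNReal.ofReal_toReal Stmt4Aux.K_lt_top.ne).symm
  set b : ℝ := (c * d₀)⁻¹ with hbdef
  have hb0 : 0 < b := by positivity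
  set C : ℝ := d₀ * (2 * Kr * Real.exp (g 0 * b)) with hCdef
  have hC0 : 0 ≤ C := by positivity
  have hbound : ∀ x : ℝ, 1 ≤ x → g 0 < x → x ^ (-α) ≤ C * Real.exp (-b * x) := by
    intro x hx1 hgx
    set t : ℝ := (x - g 0) / (c * d₀) with htdef
    have hmain : ENNReal.ofReal (x ^ (-α)) ≤
        ENNReal.ofReal (C * Real.exp (-b * x)) := by
      calc ENNReal.ofReal (x ^ (-α)) = μ {ω | X ω > x} := (hpareto x hx1).symm
        _ = μ {ω | g (fun i => Z i ω) > x} := key x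
        _ ≤ μ (⋃ j, {ω | t ≤ |Z j ω|}) := measure_mono (hsub x hgx)
        _ ≤ ∑' j : Fin d₀, μ {ω | t ≤ |Z j ω|} := measure_iUnion_le _
        _ = ∑ j : Fin d₀, μ {ω | t ≤ |Z j ω|} := tsum_fintype _
        _ ≤ ∑ j : Fin d₀, 2 * Stmt4Aux.K * ENNReal.ofReal (Real.exp (-t)) :=
            Finset.sum_le_sum fun j _ => hcoord j t
        _ = (d₀ : ℝ≥0∞) * (2 * Stmt4Aux.K * ENNReal.ofReal (Real.exp (-t))) := by
            rw [Finset.sum_const, Finset.card_univ, Fintype.card_fin, nsmul_eq_mul]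
        _ = ENNReal.ofReal (C * Real.exp (-b * x)) := by
            rw [hKeq]
            rw [← ENNReal.ofReal_ofNat, ← ENNReal.ofReal_mul (by norm_num),
              ← ENNReal.ofReal_mul (by positivity), ← ENNReal.ofReal_natCast d₀,
              ← ENNReal.ofReal_mul (by positivity)]
            congr 1
            have ht : -t = g 0 * b + (-b * x) := by
              rw [htdef, hbdef]
              field_simp
              ring
            rw [ht, Real.exp_add, hCdef]
            ring
    rwa [ENNReal.ofReal_le_ofReal_iff (by positivity)] at hmain
  -- contradiction with polynomial vs exponential decay
  have htend : Filter.Tendsto (fun x : ℝ => C * (x ^ α * Real.exp (-b * x)))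
      Filter.atTop (nhds 0) := by
    have h := tendsto_rpow_mul_exp_neg_mul_atTop_nhds_zero α b hb0
    simpa using h.const_mul C
  have hev : ∀ᶠ x : ℝ in Filter.atTop,
      C * (x ^ α * Real.exp (-b * x)) < 1 ∧ (1 ≤ x ∧ g 0 < x) := by
    exact (htend.eventually_lt_const one_pos).and
      ((Filter.eventually_ge_atTop 1).and (Filter.eventually_gt_atTop (g 0)))
  obtain ⟨x, hxlt, hx1, hgx⟩ := hev.exists
  have hx0 : (0 : ℝ) < x := lt_of_lt_of_le one_pos hx1
  have hxb := hbound x hx1 hgx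
  have hxα : (0 : ℝ) < x ^ α := Real.rpow_pos_of_pos hx0 α
  have h1 : (1 : ℝ) = x ^ (-α) * x ^ α := by
    rw [Real.rpow_neg hx0.le, inv_mul_cancel₀ hxα.ne']
  have : (1 : ℝ) ≤ C * (x ^ α * Real.exp (-b * x)) := by
    calc (1 : ℝ) = x ^ (-α) * x ^ α := h1
      _ ≤ (C * Real.exp (-b * x)) * x ^ α := mul_le_mul_of_nonneg_right hxb hxα.le
      _ = C * (x ^ α * Real.exp (-b * x)) := by ring
  linarith
end

section
/- Let Z₁ be a real random variable and suppose the real random variable X satisfies: for every c > 0 and d ∈ ℝ, P(|X| > x) / P(c|Z₁| + d > x) → ∞ as x → ∞ (X is not affinely lighter-tailed than Z₁). Let g : ℝ^{d_0} → ℝ be any Lipschitz function (w.r.t. the ℓ¹-norm) and Z a random vector with i.i.d. coordinates distributed as Z₁. Then g(Z) does not have the same distribution as X. -/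
open MeasureTheory ProbabilityTheory Filter
open scoped ENNReal

/-- non-existence of an optimal generative network: if X is not
affinely lighter-tailed than Z₁, then no ℓ¹-Lipschitz function of the i.i.d. vector Z
has the same distribution as X. -/
theorem stmt12 {Ω : Type*} [MeasurableSpace Ω] (μ : Measure Ω) [IsProbabilityMeasure μ]
    (d₀ : ℕ) (hd₀ : 0 < d₀) (Z : Fin d₀ → Ω → ℝ)
    (hmeas : ∀ j, Measurable (Z j))
    (hindep : iIndepFun Z μ)
    (hident : ∀ j, IdentDistrib (Z j) (Z ⟨0, hd₀⟩) μ μ)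
    (X : Ω → ℝ) (hX : Measurable X)
    (hheavy : ∀ c : ℝ, 0 < c → ∀ d : ℝ,
      Tendsto (fun x : ℝ =>
        μ {ω | |X ω| > x} / μ {ω | c * |Z ⟨0, hd₀⟩ ω| + d > x}) atTop atTop) :
    ∀ (g : (Fin d₀ → ℝ) → ℝ) (L : ℝ),
      (∀ z z' : Fin d₀ → ℝ, |g z - g z'| ≤ L * ∑ i, |z i - z' i|) →
      Measure.map (fun ω => g (fun i => Z i ω)) μ ≠ Measure.map X μ := by
  intro g L hLip hmap
  haveI : Nonempty (Fin d₀) := ⟨⟨0, hd₀⟩⟩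
  set c : ℝ := max L 0 * d₀ + 1 with hc_def
  have hc : 0 < c := by positivity
  set d : ℝ := |g 0| with hd_def
  -- g is continuous
  have hgcont : Continuous g := by
    have hK : (0:ℝ) ≤ max L 0 * d₀ := by positivity
    have : LipschitzWith (max L 0 * d₀).toNNReal g := by
      apply LipschitzWith.of_dist_le_mul
      intro z z'
      have h2 : (0:ℝ) ≤ ∑ i, |z i - z' i| := Finset.sum_nonneg fun i _ => abs_nonneg _
      have h3 : ∑ i, |z i - z' i| ≤ (d₀ : ℝ) * dist z z' := by
        calc ∑ i, |z i - z' i| = ∑ i : Fin d₀, dist (z i) (z' i) := by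
              simp [Real.dist_eq]
          _ ≤ ∑ _i : Fin d₀, dist z z' :=
              Finset.sum_le_sum fun i _ => dist_le_pi_dist z z' i
          _ = (d₀ : ℝ) * dist z z' := by simp [Finset.sum_const, nsmul_eq_mul]
      have : dist (g z) (g z') ≤ max L 0 * d₀ * dist z z' := by
        calc dist (g z) (g z') = |g z - g z'| := Real.dist_eq _ _
          _ ≤ L * ∑ i, |z i - z' i| := hLip z z'
          _ ≤ max L 0 * ∑ i, |z i - z' i| :=
              mul_le_mul_of_nonneg_right (le_max_left _ _) h2
          _ ≤ max L 0 * ((d₀ : ℝ) * dist z z') :=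
              mul_le_mul_of_nonneg_left h3 (le_max_right _ _)
          _ = max L 0 * d₀ * dist z z' := by ring
      simpa [Real.coe_toNNReal _ hK] using this
    exact this.continuous
  have hgZmeas : Measurable (fun ω => g (fun i => Z i ω)) :=
    hgcont.measurable.comp (measurable_pi_lambda _ fun i => hmeas i)
  -- the tail set on ℝ
  have habs : Continuous (fun t : ℝ => c * |t| + d) := by continuity
  -- step A: equal tails
  have hA : ∀ x : ℝ, μ {ω | |X ω| > x} = μ {ω | |g (fun i => Z i ω)| > x} := by
    intro x
    have hs : MeasurableSet {t : ℝ | x < |t|} :=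
      (isOpen_lt continuous_const continuous_abs).measurableSet
    have h1 : μ {ω | |X ω| > x} = Measure.map X μ {t : ℝ | x < |t|} := by
      rw [Measure.map_apply hX hs]; rfl
    have h2 : μ {ω | |g (fun i => Z i ω)| > x}
        = Measure.map (fun ω => g (fun i => Z i ω)) μ {t : ℝ | x < |t|} := by
      rw [Measure.map_apply hgZmeas hs]; rfl
    rw [h1, h2, hmap]
  -- step B: tail bound
  have hB : ∀ x : ℝ, μ {ω | |g (fun i => Z i ω)| > x}
      ≤ (d₀ : ℝ≥0∞) * μ {ω | c * |Z ⟨0, hd₀⟩ ω| + d > x} := by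
    intro x
    set s : Set ℝ := {t | c * |t| + d > x} with hs_def
    have hs : MeasurableSet s := (isOpen_lt continuous_const habs).measurableSet
    have hsub : {ω | |g (fun i => Z i ω)| > x} ⊆ ⋃ i, Z i ⁻¹' s := by
      intro ω hω
      set z : Fin d₀ → ℝ := fun i => Z i ω with hz
      obtain ⟨i, hi⟩ := Finite.exists_max (fun i => |z i|)
      have hsum : ∑ j, |z j| ≤ (d₀ : ℝ) * |z i| := by
        calc ∑ j, |z j| ≤ Finset.univ.card • |z i| :=
              Finset.sum_le_card_nsmul _ _ _ (fun j _ => hi j)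
          _ = (d₀ : ℝ) * |z i| := by simp [nsmul_eq_mul]
      have hgb : |g z| ≤ d + max L 0 * ∑ j, |z j| := by
        have := hLip z 0
        have h2 : (0:ℝ) ≤ ∑ j, |z j - 0| := Finset.sum_nonneg fun j _ => abs_nonneg _
        have h4 : L * ∑ j, |z j - 0| ≤ max L 0 * ∑ j, |z j| := by
          simpa using mul_le_mul_of_nonneg_right (le_max_left L 0) h2
        calc |g z| ≤ |g z - g 0| + |g 0| := by
              have := abs_sub_abs_le_abs_sub (g z) (g 0); nlinarith [abs_abs (g 0)]
          _ ≤ max L 0 * ∑ j, |z j| + |g 0| := by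
              have := (hLip z 0).trans h4; linarith
          _ = d + max L 0 * ∑ j, |z j| := by rw [hd_def]; ring
      have hx : x < c * |z i| + d := by
        have h5 : max L 0 * ∑ j, |z j| ≤ max L 0 * ((d₀:ℝ) * |z i|) :=
          mul_le_mul_of_nonneg_left hsum (le_max_right _ _)
        have h6 : max L 0 * ((d₀:ℝ) * |z i|) ≤ c * |z i| := by
          have h7 : max L 0 * (d₀:ℝ) ≤ c := by rw [hc_def]; linarith
          nlinarith [abs_nonneg (z i)]
        have hxg : x < |g z| := hω
        linarith
      exact Set.mem_iUnion.2 ⟨i, hx⟩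
    calc μ {ω | |g (fun i => Z i ω)| > x} ≤ μ (⋃ i, Z i ⁻¹' s) := measure_mono hsub
      _ ≤ ∑ i, μ (Z i ⁻¹' s) := measure_iUnion_fintype_le _ _
      _ = ∑ _i : Fin d₀, μ (Z ⟨0, hd₀⟩ ⁻¹' s) :=
          Finset.sum_congr rfl fun i _ => (hident i).measure_mem_eq hs
      _ = (d₀ : ℝ≥0∞) * μ (Z ⟨0, hd₀⟩ ⁻¹' s) := by
          simp [Finset.sum_const, nsmul_eq_mul]
      _ = (d₀ : ℝ≥0∞) * μ {ω | c * |Z ⟨0, hd₀⟩ ω| + d > x} := rfl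
  -- step C: ratio bounded
  have hC : ∀ x : ℝ,
      μ {ω | |X ω| > x} / μ {ω | c * |Z ⟨0, hd₀⟩ ω| + d > x} ≤ (d₀ : ℝ≥0∞) := by
    intro x
    apply ENNReal.div_le_of_le_mul
    rw [hA x]
    exact hB x
  -- contradiction
  have h := (tendsto_atTop.1 (hheavy c hc d)) ((d₀ : ℝ≥0∞) + 1)
  obtain ⟨x, hx⟩ := h.exists
  have : (d₀ : ℝ≥0∞) + 1 ≤ (d₀ : ℝ≥0∞) := hx.trans (hC x)
  exact (ENNReal.lt_add_right (ENNReal.natCast_ne_top d₀) one_ne_zero).not_ge this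
end
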